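/- arXiv:2110.11146 — 5 statements merged into one kernel-verified Lean document; each statement's English description precedes it below -/
import Mathlib

section
/- For any permutation σ of {1,...,n}, the sum over all inversions (i,j) (pairs i<j with σ(i)>σ(j)) of (σ(i) - σ(j)) equals half of the sum over i from 1 to n of (σ(i) - i)². -/
open Finset

lemma key_lemma (n : ℕ) (f : Fin n → ℤ) :
    ∑ p ∈ Finset.univ.filter (fun p : Fin n × Fin n => p.1 < p.2), (f p.2 - f p.1)
      = ∑ k : Fin n, (2 * (k : ℤ) - n + 1) * f k := by
  have hIio : ∀ j : Fin n, univ.filter (fun i : Fin n => i < j) = Finset.Iio j := by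
    intro j; ext i; simp
  have hIoi : ∀ i : Fin n, univ.filter (fun j : Fin n => i < j) = Finset.Ioi i := by
    intro i; ext j; simp
  rw [Finset.sum_sub_distrib]
  have hA : ∑ p ∈ Finset.univ.filter (fun p : Fin n × Fin n => p.1 < p.2), f p.2
      = ∑ k : Fin n, (k : ℤ) * f k := by
    rw [Finset.sum_filter, Fintype.sum_prod_type_right]
    refine Finset.sum_congr rfl fun j _ => ?_
    rw [← Finset.sum_filter, hIio]
    simp only []
    rw [Finset.sum_const, Fin.card_Iio, nsmul_eq_mul]
  have hB : ∑ p ∈ Finset.univ.filter (fun p : Fin n × Fin n => p.1 < p.2), f p.1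
      = ∑ k : Fin n, ((n : ℤ) - 1 - k) * f k := by
    rw [Finset.sum_filter, Fintype.sum_prod_type]
    refine Finset.sum_congr rfl fun i _ => ?_
    rw [← Finset.sum_filter, hIoi]
    simp only []
    rw [Finset.sum_const, Fin.card_Ioi, nsmul_eq_mul]
    have : ((n - 1 - (i : ℕ) : ℕ) : ℤ) = (n : ℤ) - 1 - (i : ℕ) := by
      have := i.isLt; push_cast [Nat.sub_sub]; omega
    rw [this]
  rw [hA, hB, ← Finset.sum_sub_distrib]
  exact Finset.sum_congr rfl fun k _ => by ring

/-- For any permutation σ of {1,...,n}, the sum over all inversions (i,j)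
(pairs i<j with σ(i)>σ(j)) of (σ(i) - σ(j)) equals half of Σᵢ (σ(i) - i)². -/
theorem stmt_0 (n : ℕ) (σ : Equiv.Perm (Fin n)) :
    2 * ∑ p ∈ Finset.univ.filter
        (fun p : Fin n × Fin n => p.1 < p.2 ∧ σ p.2 < σ p.1),
        ((σ p.1 : ℤ) - (σ p.2 : ℤ))
      = ∑ i : Fin n, ((σ i : ℤ) - (i : ℤ)) ^ 2 := by
  have hsum1 : ∑ k : Fin n, ((σ k : ℤ)) = ∑ k : Fin n, (k : ℤ) :=
    Equiv.sum_comp σ (fun k : Fin n => (k : ℤ))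
  have hsum2 : ∑ k : Fin n, ((σ k : ℤ)) ^ 2 = ∑ k : Fin n, (k : ℤ) ^ 2 :=
    Equiv.sum_comp σ (fun k : Fin n => (k : ℤ) ^ 2)
  -- abbreviation for the pair set
  set P := Finset.univ.filter (fun p : Fin n × Fin n => p.1 < p.2) with hP
  -- rewrite the inversion sum as a filtered sum inside P
  have hfilter : Finset.univ.filter
      (fun p : Fin n × Fin n => p.1 < p.2 ∧ σ p.2 < σ p.1)
      = P.filter (fun p => σ p.2 < σ p.1) := by
    rw [hP, Finset.filter_filter]
  rw [hfilter]
  -- |σi - σj| sum over P is invariant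
  have habs : ∑ p ∈ P, |(σ p.1 : ℤ) - (σ p.2 : ℤ)| = ∑ p ∈ P, ((p.2 : ℤ) - (p.1 : ℤ)) := by
    have hfull : ∑ p : Fin n × Fin n, |(σ p.1 : ℤ) - (σ p.2 : ℤ)|
        = ∑ p : Fin n × Fin n, |(p.1 : ℤ) - (p.2 : ℤ)| :=
      Equiv.sum_comp (Equiv.prodCongr σ σ) (fun p : Fin n × Fin n => |(p.1 : ℤ) - (p.2 : ℤ)|)
    -- split full sums into P, diag, swapped P
    have hsplit : ∀ g : Fin n × Fin n → ℤ, (∀ p : Fin n × Fin n, g (p.2, p.1) = g p) →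
        (∀ i : Fin n, g (i, i) = 0) →
        ∑ p : Fin n × Fin n, g p = 2 * ∑ p ∈ P, g p := by
      intro g hsymm hdiag
      have h1 : ∑ p ∈ Finset.univ.filter (fun p : Fin n × Fin n => p.2 < p.1), g p
          = ∑ p ∈ P, g p := by
        apply Finset.sum_nbij' (fun p => (p.2, p.1)) (fun p => (p.2, p.1)) <;>
          simp +contextual [hP, hsymm]
      have h2 : ∑ p ∈ Finset.univ.filter (fun p : Fin n × Fin n => ¬ p.1 < p.2), g p
          = ∑ p ∈ P, g p := by
        rw [← h1]
        rw [← Finset.sum_filter_add_sum_filter_not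
          (Finset.univ.filter (fun p : Fin n × Fin n => ¬ p.1 < p.2))
          (fun p => p.2 < p.1), Finset.filter_filter, Finset.filter_filter]
        have : ∑ p ∈ Finset.univ.filter (fun p : Fin n × Fin n => ¬p.1 < p.2 ∧ ¬p.2 < p.1), g p
            = 0 := by
          apply Finset.sum_eq_zero
          intro p hp
          simp only [Finset.mem_filter] at hp
          have : p.1 = p.2 := le_antisymm (not_lt.mp hp.2.2) (not_lt.mp hp.2.1)
          have := hdiag p.1
          rw [← hsymm p]
          simpa [this] using hdiag p.2 ▸ (by rw [‹p.1 = p.2›])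
        rw [this, add_zero]
        apply Finset.sum_congr _ (fun _ _ => rfl)
        ext p; simp; omega
      calc ∑ p : Fin n × Fin n, g p
          = ∑ p ∈ P, g p + ∑ p ∈ Finset.univ.filter (fun p : Fin n × Fin n => ¬ p.1 < p.2), g p := by
            rw [hP, Finset.sum_filter_add_sum_filter_not]
        _ = 2 * ∑ p ∈ P, g p := by rw [h2]; ring
    have e1 := hsplit (fun p => |(σ p.1 : ℤ) - (σ p.2 : ℤ)|)
      (fun p => abs_sub_comm _ _) (fun i => by simp)
    have e2 := hsplit (fun p => |(p.1 : ℤ) - (p.2 : ℤ)|)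
      (fun p => abs_sub_comm _ _) (fun i => by simp)
    have e3 : ∑ p ∈ P, |(p.1 : ℤ) - (p.2 : ℤ)| = ∑ p ∈ P, ((p.2 : ℤ) - (p.1 : ℤ)) := by
      apply Finset.sum_congr rfl
      intro p hp
      simp only [hP, Finset.mem_filter] at hp
      rw [abs_sub_comm, abs_of_pos]
      have : (p.1 : ℕ) < (p.2 : ℕ) := hp.2
      omega
    have := hfull
    rw [e1, e2, e3] at this
    linarith
  -- pointwise doubling identity
  have hdouble : 2 * ∑ p ∈ P.filter (fun p => σ p.2 < σ p.1), ((σ p.1 : ℤ) - (σ p.2 : ℤ))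
      = ∑ p ∈ P, (|(σ p.1 : ℤ) - (σ p.2 : ℤ)| - ((σ p.2 : ℤ) - (σ p.1 : ℤ))) := by
    rw [Finset.sum_filter, Finset.mul_sum]
    apply Finset.sum_congr rfl
    intro p _
    by_cases h : σ p.2 < σ p.1
    · have : (σ p.2 : ℕ) < (σ p.1 : ℕ) := h
      rw [if_pos h, abs_of_pos (by omega : (0:ℤ) < (σ p.1 : ℤ) - (σ p.2 : ℤ))]
      ring
    · have : (σ p.1 : ℕ) ≤ (σ p.2 : ℕ) := not_lt.mp h
      rw [if_neg h, abs_of_nonpos (by omega : ((σ p.1 : ℤ) - (σ p.2 : ℤ)) ≤ 0)]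
      omega
  rw [hdouble, Finset.sum_sub_distrib, habs, ← Finset.sum_sub_distrib]
  have : ∑ p ∈ P, (((p.2 : ℤ) - (p.1 : ℤ)) - ((σ p.2 : ℤ) - (σ p.1 : ℤ)))
      = ∑ p ∈ P, ((fun k : Fin n => (k : ℤ) - (σ k : ℤ)) p.2 - (fun k : Fin n => (k : ℤ) - (σ k : ℤ)) p.1) := by
    apply Finset.sum_congr rfl; intro p _; ring
  rw [this, key_lemma n (fun k : Fin n => (k : ℤ) - (σ k : ℤ))]
  have expand : ∀ k : Fin n, (2 * (k : ℤ) - n + 1) * ((k : ℤ) - (σ k : ℤ))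
      = ((σ k : ℤ) - (k : ℤ)) ^ 2 + ((k : ℤ) ^ 2 - (σ k : ℤ) ^ 2)
        - ((n : ℤ) - 1) * ((k : ℤ) - (σ k : ℤ)) := fun k => by ring
  calc ∑ k : Fin n, (2 * (k : ℤ) - n + 1) * ((k : ℤ) - (σ k : ℤ))
      = ∑ k : Fin n, (((σ k : ℤ) - (k : ℤ)) ^ 2 + ((k : ℤ) ^ 2 - (σ k : ℤ) ^ 2)
          - ((n : ℤ) - 1) * ((k : ℤ) - (σ k : ℤ))) := Finset.sum_congr rfl fun k _ => expand k
    _ = ∑ i : Fin n, ((σ i : ℤ) - (i : ℤ)) ^ 2 := by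
        rw [Finset.sum_sub_distrib, Finset.sum_add_distrib, Finset.sum_sub_distrib,
          ← Finset.mul_sum, Finset.sum_sub_distrib, hsum1, hsum2]
        ring
end

section
/- For any permutation σ of {1,...,n}, V(σ) = 2(c₂₁(σ) + c₂₃₁(σ) + c₃₁₂(σ) + c₃₂₁(σ)), where c_π(σ) denotes the number of occurrences of the classical pattern π in σ. -/
open Finset

/-- Number of occurrences of the classical pattern 21. -/
def c21 {n : ℕ} (σ : Equiv.Perm (Fin n)) : ℕ :=
  (Finset.univ.filter (fun p : Fin n × Fin n =>
    p.1 < p.2 ∧ σ p.2 < σ p.1)).card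

/-- Number of occurrences of the classical pattern 231. -/
def c231 {n : ℕ} (σ : Equiv.Perm (Fin n)) : ℕ :=
  (Finset.univ.filter (fun t : Fin n × Fin n × Fin n =>
    t.1 < t.2.1 ∧ t.2.1 < t.2.2 ∧ σ t.2.2 < σ t.1 ∧ σ t.1 < σ t.2.1)).card

/-- Number of occurrences of the classical pattern 312. -/
def c312 {n : ℕ} (σ : Equiv.Perm (Fin n)) : ℕ :=
  (Finset.univ.filter (fun t : Fin n × Fin n × Fin n =>
    t.1 < t.2.1 ∧ t.2.1 < t.2.2 ∧ σ t.2.1 < σ t.2.2 ∧ σ t.2.2 < σ t.1)).card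

/-- Number of occurrences of the classical pattern 321. -/
def c321 {n : ℕ} (σ : Equiv.Perm (Fin n)) : ℕ :=
  (Finset.univ.filter (fun t : Fin n × Fin n × Fin n =>
    t.1 < t.2.1 ∧ t.2.1 < t.2.2 ∧ σ t.2.2 < σ t.2.1 ∧ σ t.2.1 < σ t.1)).card

namespace VarAux

variable {n : ℕ}

/-- inversion indicator -/
def f (σ : Equiv.Perm (Fin n)) (i j : Fin n) : ℤ :=
  if (i : ℕ) < (j : ℕ) ∧ ((σ j : Fin n) : ℕ) < ((σ i : Fin n) : ℕ) then 1 else 0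

def g231 (σ : Equiv.Perm (Fin n)) (a b c : Fin n) : ℤ :=
  if (a:ℕ) < (b:ℕ) ∧ (b:ℕ) < (c:ℕ) ∧ ((σ c : Fin n):ℕ) < ((σ a : Fin n):ℕ) ∧
      ((σ a : Fin n):ℕ) < ((σ b : Fin n):ℕ) then 1 else 0

def g312 (σ : Equiv.Perm (Fin n)) (a b c : Fin n) : ℤ :=
  if (a:ℕ) < (b:ℕ) ∧ (b:ℕ) < (c:ℕ) ∧ ((σ b : Fin n):ℕ) < ((σ c : Fin n):ℕ) ∧
      ((σ c : Fin n):ℕ) < ((σ a : Fin n):ℕ) then 1 else 0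

def g321 (σ : Equiv.Perm (Fin n)) (a b c : Fin n) : ℤ :=
  if (a:ℕ) < (b:ℕ) ∧ (b:ℕ) < (c:ℕ) ∧ ((σ c : Fin n):ℕ) < ((σ b : Fin n):ℕ) ∧
      ((σ b : Fin n):ℕ) < ((σ a : Fin n):ℕ) then 1 else 0

lemma sum_lt (i : Fin n) : ∑ j : Fin n, (if (j:ℕ) < (i:ℕ) then (1:ℤ) else 0) = (i:ℕ) := by
  rw [Finset.sum_boole]
  norm_cast
  have : (Finset.univ.filter fun j : Fin n => j < i) = Finset.Iio i := by
    ext j; simp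
  rw [this, Fin.card_Iio]

lemma sum_sigma_lt (σ : Equiv.Perm (Fin n)) (i : Fin n) :
    ∑ j : Fin n, (if ((σ j : Fin n):ℕ) < ((σ i : Fin n):ℕ) then (1:ℤ) else 0)
      = ((σ i : Fin n):ℕ) := by
  rw [Equiv.sum_comp σ (fun v : Fin n => if (v:ℕ) < ((σ i : Fin n):ℕ) then (1:ℤ) else 0)]
  exact sum_lt _

lemma key (σ : Equiv.Perm (Fin n)) (i : Fin n) :
    ((σ i : Fin n) : ℤ) - (i : ℤ) = (∑ j, f σ i j) - (∑ j, f σ j i) := by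
  have h1 := sum_sigma_lt σ i
  have h2 := sum_lt i
  have h : ∀ j : Fin n,
      f σ i j - f σ j i =
        (if ((σ j : Fin n):ℕ) < ((σ i : Fin n):ℕ) then (1:ℤ) else 0)
          - (if (j:ℕ) < (i:ℕ) then (1:ℤ) else 0) := by
    intro j
    have hiff : (j:ℕ) = (i:ℕ) ↔ ((σ j : Fin n):ℕ) = ((σ i : Fin n):ℕ) := by
      rw [Fin.val_eq_val, Fin.val_eq_val, Equiv.apply_eq_iff_eq]
    simp only [f]
    split_ifs <;> omega
  rw [← Finset.sum_sub_distrib]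
  simp only [h]
  rw [Finset.sum_sub_distrib, h1, h2]

lemma hinj (σ : Equiv.Perm (Fin n)) (j k : Fin n) :
    (j:ℕ) = (k:ℕ) ↔ ((σ j : Fin n):ℕ) = ((σ k : Fin n):ℕ) := by
  rw [Fin.val_eq_val, Fin.val_eq_val, Equiv.apply_eq_iff_eq]

lemma split1 (σ : Equiv.Perm (Fin n)) (i j k : Fin n) :
    f σ i j * f σ i k =
      (if j = k then f σ i j else 0)
        + g312 σ i j k + g321 σ i j k + g312 σ i k j + g321 σ i k j := by
  have h := hinj σ j k
  simp only [f, g312, g321, Fin.ext_iff]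
  split_ifs <;> omega

lemma split2 (σ : Equiv.Perm (Fin n)) (i j k : Fin n) :
    f σ j i * f σ k i =
      (if j = k then f σ j i else 0)
        + g231 σ j k i + g321 σ j k i + g231 σ k j i + g321 σ k j i := by
  have h := hinj σ j k
  simp only [f, g231, g321, Fin.ext_iff]
  split_ifs <;> omega

lemma split3 (σ : Equiv.Perm (Fin n)) (i j k : Fin n) :
    f σ i j * f σ k i = g321 σ k i j := by
  simp only [f, g321]
  split_ifs <;> omega

lemma c21_eq (σ : Equiv.Perm (Fin n)) :
    (c21 σ : ℤ) = ∑ i : Fin n, ∑ j : Fin n, f σ i j := by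
  rw [c21, Finset.card_filter]
  push_cast
  rw [Fintype.sum_prod_type]
  simp only [f, Fin.lt_def]

lemma c231_eq (σ : Equiv.Perm (Fin n)) :
    (c231 σ : ℤ) = ∑ a : Fin n, ∑ b : Fin n, ∑ c : Fin n, g231 σ a b c := by
  rw [c231, Finset.card_filter]
  push_cast
  simp only [Fintype.sum_prod_type]
  simp only [g231, Fin.lt_def]

lemma c312_eq (σ : Equiv.Perm (Fin n)) :
    (c312 σ : ℤ) = ∑ a : Fin n, ∑ b : Fin n, ∑ c : Fin n, g312 σ a b c := by
  rw [c312, Finset.card_filter]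
  push_cast
  simp only [Fintype.sum_prod_type]
  simp only [g312, Fin.lt_def]

lemma c321_eq (σ : Equiv.Perm (Fin n)) :
    (c321 σ : ℤ) = ∑ a : Fin n, ∑ b : Fin n, ∑ c : Fin n, g321 σ a b c := by
  rw [c321, Finset.card_filter]
  push_cast
  simp only [Fintype.sum_prod_type]
  simp only [g321, Fin.lt_def]

lemma S1_eq (σ : Equiv.Perm (Fin n)) :
    (∑ i : Fin n, ∑ j : Fin n, ∑ k : Fin n, f σ i j * f σ i k)
      = (c21 σ : ℤ) + 2 * c312 σ + 2 * c321 σ := by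
  rw [c21_eq, c312_eq, c321_eq]
  simp only [split1, Finset.sum_add_distrib]
  have hd : ∀ i : Fin n, ∑ j : Fin n, ∑ k : Fin n, (if j = k then f σ i j else 0) = ∑ j, f σ i j := by
    intro i
    refine Finset.sum_congr rfl fun j _ => ?_
    simp
  have hswap312 : ∀ i : Fin n,
      ∑ j : Fin n, ∑ k : Fin n, g312 σ i k j = ∑ j : Fin n, ∑ k : Fin n, g312 σ i j k :=
    fun i => Finset.sum_comm
  have hswap321 : ∀ i : Fin n,
      ∑ j : Fin n, ∑ k : Fin n, g321 σ i k j = ∑ j : Fin n, ∑ k : Fin n, g321 σ i j k :=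
    fun i => Finset.sum_comm
  simp only [hd, hswap312, hswap321]
  ring

lemma S2_eq (σ : Equiv.Perm (Fin n)) :
    (∑ i : Fin n, ∑ j : Fin n, ∑ k : Fin n, f σ j i * f σ k i)
      = (c21 σ : ℤ) + 2 * c231 σ + 2 * c321 σ := by
  rw [c231_eq, c321_eq]
  simp only [split2, Finset.sum_add_distrib]
  have hd : ∀ i : Fin n, ∑ j : Fin n, ∑ k : Fin n, (if j = k then f σ j i else 0) = ∑ j, f σ j i := by
    intro i
    refine Finset.sum_congr rfl fun j _ => ?_
    simp
  have hc : (∑ i : Fin n, ∑ j : Fin n, f σ j i) = (c21 σ : ℤ) := by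
    rw [c21_eq]; exact Finset.sum_comm
  have hswap231 : ∀ i : Fin n,
      ∑ j : Fin n, ∑ k : Fin n, g231 σ k j i = ∑ j : Fin n, ∑ k : Fin n, g231 σ j k i :=
    fun i => Finset.sum_comm
  have hswap321 : ∀ i : Fin n,
      ∑ j : Fin n, ∑ k : Fin n, g321 σ k j i = ∑ j : Fin n, ∑ k : Fin n, g321 σ j k i :=
    fun i => Finset.sum_comm
  simp only [hd, hswap231, hswap321]
  have hre : ∀ g : Fin n → Fin n → Fin n → ℤ,
      (∑ i : Fin n, ∑ j : Fin n, ∑ k : Fin n, g j k i)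
        = ∑ a : Fin n, ∑ b : Fin n, ∑ c : Fin n, g a b c := by
    intro g
    rw [Finset.sum_comm]
    exact Finset.sum_congr rfl fun j _ => Finset.sum_comm
  rw [hre (fun a b c => g231 σ a b c), hre (fun a b c => g321 σ a b c), hc]
  ring

lemma S3_eq (σ : Equiv.Perm (Fin n)) :
    (∑ i : Fin n, ∑ j : Fin n, ∑ k : Fin n, f σ i j * f σ k i) = (c321 σ : ℤ) := by
  rw [c321_eq]
  simp only [split3]
  have : ∀ i : Fin n, ∑ j : Fin n, ∑ k : Fin n, g321 σ k i j
      = ∑ k : Fin n, ∑ j : Fin n, g321 σ k i j := fun i => Finset.sum_comm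
  simp only [this]
  exact Finset.sum_comm

end VarAux

open VarAux in
/-- V(σ) = 2(c₂₁(σ) + c₂₃₁(σ) + c₃₁₂(σ) + c₃₂₁(σ)). -/
theorem stmt_1 (n : ℕ) (σ : Equiv.Perm (Fin n)) :
    ∑ i : Fin n, ((σ i : ℤ) - (i : ℤ)) ^ 2
      = 2 * ((c21 σ : ℤ) + c231 σ + c312 σ + c321 σ) := by
  have h1 : ∑ i : Fin n, ((σ i : ℤ) - (i : ℤ)) ^ 2
      = ∑ i : Fin n, ((∑ j, f σ i j) - (∑ j, f σ j i)) ^ 2 := by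
    refine Finset.sum_congr rfl fun i _ => ?_
    rw [← key σ i]
  rw [h1]
  have h2 : ∀ i : Fin n, ((∑ j, f σ i j) - (∑ j, f σ j i)) ^ 2
      = (∑ j : Fin n, ∑ k : Fin n, f σ i j * f σ i k)
        + (∑ j : Fin n, ∑ k : Fin n, f σ j i * f σ k i)
        - 2 * (∑ j : Fin n, ∑ k : Fin n, f σ i j * f σ k i) := by
    intro i
    rw [← Finset.sum_mul_sum, ← Finset.sum_mul_sum, ← Finset.sum_mul_sum]
    ring
  simp only [h2]
  rw [Finset.sum_sub_distrib, Finset.sum_add_distrib, ← Finset.mul_sum]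
  rw [S1_eq, S2_eq, S3_eq]
  ring
end

section
/- For every permutation σ of {1,...,n}, (ℓ_S(σ) + ℓ_T(σ))/2 ≤ depth(σ) ≤ ℓ_S(σ), where depth(σ) = Σ_{σ(i)>i}(σ(i)-i), ℓ_S is the inversion number, and ℓ_T = n minus the number of cycles. -/
open Equiv Equiv.Perm Finset

/-- The number of cycles of σ (orbits, including fixed points). -/
def numCycles {n : ℕ} (σ : Equiv.Perm (Fin n)) : ℕ :=
  σ.cycleType.card + (Finset.univ.filter (fun x => σ x = x)).card

/-- The inversion number (Coxeter length) of σ. -/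
def lenS {n : ℕ} (σ : Equiv.Perm (Fin n)) : ℕ :=
  (Finset.univ.filter (fun p : Fin n × Fin n => p.1 < p.2 ∧ σ p.2 < σ p.1)).card

/-- The depth of σ. -/
def depth {n : ℕ} (σ : Equiv.Perm (Fin n)) : ℤ :=
  ∑ i ∈ Finset.univ.filter (fun i : Fin n => (i : ℕ) < (σ i : ℕ)),
    ((σ i : ℤ) - (i : ℤ))

namespace DGAux

variable {n : ℕ}

def Dd {n : ℕ} (σ : Equiv.Perm (Fin n)) : ℤ := ∑ p : Fin n, |(σ p : ℤ) - (p : ℤ)|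

lemma numCycles_eq (σ : Perm (Fin n)) :
    numCycles σ = σ.cycleFactorsFinset.card + (n - σ.support.card) := by
  have h1 : σ.cycleType.card = σ.cycleFactorsFinset.card := by
    simp [cycleType]
  have h2 : (Finset.univ.filter (fun x => σ x = x)).card = n - σ.support.card := by
    have : (Finset.univ.filter (fun x => σ x = x)) = Finset.univ \ σ.support := by
      ext x; simp [Equiv.Perm.mem_support]
    rw [this, Finset.card_sdiff_of_subset (Finset.subset_univ _), Finset.card_univ, Fintype.card_fin]
  rw [numCycles, h1, h2]

lemma support_card_le (σ : Perm (Fin n)) : σ.support.card ≤ n := by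
  simpa using Finset.card_le_card (Finset.subset_univ σ.support)

lemma numCycles_le (σ : Perm (Fin n)) : numCycles σ ≤ n := by
  rw [numCycles_eq]
  have h1 : σ.cycleFactorsFinset.card ≤ σ.support.card := by
    calc σ.cycleFactorsFinset.card = σ.cycleType.card := by simp [cycleType]
    _ ≤ σ.cycleType.sum := by
        have := Multiset.card_nsmul_le_sum (s := σ.cycleType) (a := 1)
          (fun x hx => le_trans (by norm_num) (two_le_of_mem_cycleType hx))
        simpa using this
    _ = σ.support.card := σ.sum_cycleType
  have := support_card_le σ
  omega

lemma numCycles_swap_mul (f : Perm (Fin n)) (x : Fin n) (hx : f x ≠ x) :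
    numCycles (Equiv.swap x (f x) * f) = numCycles f + 1 := by
  have hxs : x ∈ f.support := mem_support.2 hx
  have hsup2 : 2 ≤ f.support.card := by
    apply Finset.one_lt_card.2
    exact ⟨x, hxs, f x, mem_support.2 (fun h => hx (f.injective h)), (Ne.symm hx)⟩
  by_cases hffx : f (f x) = x
  · -- x is in a 2-cycle: swap x (f x) ∈ cycleFactorsFinset f
    set s : Perm (Fin n) := Equiv.swap x (f x) with hs
    have hsc : s ∈ f.cycleFactorsFinset := by
      rw [mem_cycleFactorsFinset_iff]
      refine ⟨isCycle_swap (Ne.symm hx), ?_⟩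
      intro a ha
      rw [support_swap (Ne.symm hx)] at ha
      simp only [Finset.mem_insert, Finset.mem_singleton] at ha
      rcases ha with rfl | rfl
      · rw [hs, Equiv.swap_apply_left]
      · rw [hs, Equiv.swap_apply_right, hffx]
    have hdisj : Perm.Disjoint (f * s⁻¹) s := disjoint_mul_inv_of_mem_cycleFactorsFinset hsc
    have hss : s⁻¹ = s := by rw [hs, Equiv.swap_inv]
    have hcomm : Commute (f * s⁻¹) s := hdisj.commute
    have hsf : s * f = f * s⁻¹ := by
      rw [hss]
      have := hcomm.eq
      rw [hss] at this
      calc s * f = s * ((f * s) * s) := by rw [mul_assoc, hs]; simp [Equiv.swap_mul_self]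
      _ = s * (s * (f * s)) := by rw [this]
      _ = f * s := by rw [← mul_assoc, ← mul_assoc, hs]; simp [Equiv.swap_mul_self]
    have hfac : (s * f).cycleFactorsFinset = f.cycleFactorsFinset \ {s} := by
      rw [hsf]
      exact cycleFactorsFinset_mul_inv_mem_eq_sdiff hsc
    have hdisj' : Perm.Disjoint (s * f) s := by rw [hsf]; exact hdisj
    have hfeq : f = (s * f) * s := by
      rw [hsf, hss, mul_assoc, hs]; simp [Equiv.swap_mul_self]
    have hcardsup : f.support.card = (s * f).support.card + 2 := by
      conv_lhs => rw [hfeq]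
      rw [hdisj'.card_support_mul, hs, card_support_swap (Ne.symm hx)]
    rw [numCycles_eq, numCycles_eq, hfac,
      Finset.card_sdiff_of_subset (by simpa using hsc), Finset.card_singleton]
    have h1 : 1 ≤ f.cycleFactorsFinset.card := Finset.card_pos.2 ⟨s, hsc⟩
    have := support_card_le f
    have h3 := support_card_le (s * f)
    omega
  · -- general case: split the cycle of x
    set c : Perm (Fin n) := f.cycleOf x with hc
    have hcmem : c ∈ f.cycleFactorsFinset := cycleOf_mem_cycleFactorsFinset_iff.2 hxs
    have hcx : c x = f x := cycleOf_apply_self f x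
    have hcfx : c (f x) = f (f x) := by
      rw [hc, cycleOf_apply,
        if_pos ((Equiv.Perm.sameCycle_apply_right (f := f)).mpr (Equiv.Perm.SameCycle.refl f x))]
    have hccycle : c.IsCycle := isCycle_cycleOf f hx
    have hc'c : (Equiv.swap x (c x) * c).IsCycle := by
      apply hccycle.swap_mul
      · rw [hcx]; exact hx
      · rw [hcx, hcfx]; exact hffx
    set c' : Perm (Fin n) := Equiv.swap x (f x) * c with hc'
    have hc'cyc : c'.IsCycle := by rw [hc', ← hcx]; exact hc'c
    set h : Perm (Fin n) := f * c⁻¹ with hh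
    have hdisj : Perm.Disjoint h c := disjoint_mul_inv_of_mem_cycleFactorsFinset hcmem
    have hfch : f = c * h := by
      rw [hh, ← hdisj.commute.eq, mul_assoc]; simp
    have hg : Equiv.swap x (f x) * f = c' * h := by
      rw [hc', hfch, mul_assoc]
    have hsuppc' : c'.support = c.support \ {x} := by
      rw [hc', ← hcx]
      exact support_swap_mul_eq c x (by rw [hcx, hcfx]; exact hffx)
    have hdisj' : Perm.Disjoint c' h := by
      rw [disjoint_iff_disjoint_support] at hdisj ⊢
      rw [hsuppc']
      exact Disjoint.mono_left Finset.sdiff_subset hdisj.symm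
    have hfach : h.cycleFactorsFinset = f.cycleFactorsFinset \ {c} :=
      cycleFactorsFinset_mul_inv_mem_eq_sdiff hcmem
    have hfac : (Equiv.swap x (f x) * f).cycleFactorsFinset =
        {c'} ∪ (f.cycleFactorsFinset \ {c}) := by
      rw [hg, hdisj'.cycleFactorsFinset_mul_eq_union, hc'cyc.cycleFactorsFinset_eq_singleton,
        hfach]
    have hc'notmem : c' ∉ f.cycleFactorsFinset \ {c} := by
      rw [← hfach]
      intro hmem
      have h1 : c'.support ≤ h.support := mem_cycleFactorsFinset_support_le hmem
      have h2 : c'.support.Nonempty := hc'cyc.nonempty_support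
      obtain ⟨a, ha⟩ := h2
      have := (disjoint_iff_disjoint_support.1 hdisj').le_bot (Finset.mem_inter.2 ⟨ha, h1 ha⟩)
      simp at this
    have hsupg : (Equiv.swap x (f x) * f).support = f.support \ {x} :=
      support_swap_mul_eq f x hffx
    rw [numCycles_eq, numCycles_eq, hfac, hsupg,
      Finset.card_union_of_disjoint (by simpa using hc'notmem),
      Finset.card_sdiff_of_subset (by simpa using hcmem),
      Finset.card_sdiff_of_subset (by simpa using hxs)]
    have h1 : 1 ≤ f.cycleFactorsFinset.card := Finset.card_pos.2 ⟨c, hcmem⟩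
    have := support_card_le f
    simp only [Finset.card_singleton]
    omega

lemma two_depth (σ : Perm (Fin n)) : 2 * depth σ = Dd σ := by
  classical
  have hsum : ∑ p : Fin n, ((σ p : ℤ) - (p : ℤ)) = 0 := by
    rw [Finset.sum_sub_distrib]
    rw [Equiv.sum_comp σ (fun x : Fin n => (x : ℤ))]
    ring
  rw [← Finset.sum_filter_add_sum_filter_not Finset.univ
    (fun i : Fin n => (i : ℕ) < (σ i : ℕ))] at hsum
  have h2 : Dd σ = ∑ i ∈ Finset.univ.filter (fun i : Fin n => (i : ℕ) < (σ i : ℕ)),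
      ((σ i : ℤ) - i) + ∑ i ∈ Finset.univ.filter (fun i : Fin n => ¬ (i : ℕ) < (σ i : ℕ)),
      -((σ i : ℤ) - i) := by
    rw [Dd, ← Finset.sum_filter_add_sum_filter_not Finset.univ
      (fun i : Fin n => (i : ℕ) < (σ i : ℕ))]
    congr 1
    · apply Finset.sum_congr rfl
      intro i hi
      simp only [Finset.mem_filter] at hi
      have : (i : ℤ) < (σ i : ℤ) := by exact_mod_cast hi.2
      rw [abs_of_pos]; omega
    · apply Finset.sum_congr rfl
      intro i hi
      simp only [Finset.mem_filter] at hi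
      have : (σ i : ℤ) ≤ (i : ℤ) := by
        have := hi.2; push_neg at this; exact_mod_cast this
      rw [abs_of_nonpos]; omega
  rw [h2, depth, Finset.sum_neg_distrib]
  omega

lemma card_filter_val_eq (s : Finset ℕ) (hs : ∀ k ∈ s, k < n) :
    (Finset.univ.filter (fun q : Fin n => (q : ℕ) ∈ s)).card = s.card := by
  classical
  refine Finset.card_bij' (fun (q : Fin n) _ => (q : ℕ)) (fun k hk => ⟨k, hs k hk⟩) ?_ ?_ ?_ ?_
  · intro a ha; exact (Finset.mem_filter.1 ha).2
  · intro k hk; simp only [Finset.mem_filter, Finset.mem_univ, true_and]; exact hk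
  · intro a _; rfl
  · intro k _; rfl

lemma card_filter_comp (σ : Perm (Fin n)) (p : Fin n → Prop) [DecidablePred p] :
    (Finset.univ.filter (fun q => p (σ q))).card = (Finset.univ.filter p).card := by
  apply Finset.card_equiv σ
  intro q; simp

lemma card_lt_val (b : Fin n) :
    (Finset.univ.filter (fun q : Fin n => (q : ℕ) < (b : ℕ))).card = (b : ℕ) := by
  have : (Finset.univ.filter (fun q : Fin n => (q : ℕ) < (b : ℕ)))
      = (Finset.univ.filter (fun q : Fin n => (q : ℕ) ∈ Finset.range b)) := by
    apply Finset.filter_congr; intro q _; simp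
  rw [this, card_filter_val_eq _ (fun k hk => lt_trans (Finset.mem_range.1 hk) b.isLt),
    Finset.card_range]

lemma card_Ioo_val (i b : Fin n) :
    (Finset.univ.filter (fun v : Fin n => i < v ∧ v < b)).card = (b : ℕ) - (i : ℕ) - 1 := by
  have : (Finset.univ.filter (fun v : Fin n => i < v ∧ v < b))
      = (Finset.univ.filter (fun v : Fin n => (v : ℕ) ∈ Finset.Ioo (i : ℕ) (b : ℕ))) := by
    apply Finset.filter_congr; intro v _
    simp only [Finset.mem_Ioo]
    exact Iff.rfl
  rw [this, card_filter_val_eq _ (fun k hk => lt_trans (Finset.mem_Ioo.1 hk).2 b.isLt),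
    Nat.card_Ioo]

lemma key_count (σ : Perm (Fin n)) (i : Fin n) :
    (σ i : ℕ) ≤ (Finset.univ.filter (fun q : Fin n => i < q ∧ σ q < σ i)).card + (i : ℕ) := by
  classical
  set Fi := Finset.univ.filter (fun q : Fin n => i < q ∧ σ q < σ i) with hFi
  have hA : (Finset.univ.filter (fun q : Fin n => σ q < σ i)).card = (σ i : ℕ) := by
    rw [card_filter_comp σ (fun v => v < σ i)]
    have : (Finset.univ.filter (fun v : Fin n => v < σ i))
        = (Finset.univ.filter (fun v : Fin n => (v : ℕ) < ((σ i) : ℕ))) := by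
      apply Finset.filter_congr; intro q _; exact Iff.rfl
    rw [this, card_lt_val]
  have hsub : (Finset.univ.filter (fun q : Fin n => σ q < σ i)) ⊆
      Fi ∪ (Finset.univ.filter (fun q : Fin n => (q : ℕ) < (i : ℕ))) := by
    intro q hq
    simp only [Finset.mem_filter, Finset.mem_univ, true_and] at hq
    rcases lt_trichotomy q i with h | h | h
    · exact Finset.mem_union_right _ (Finset.mem_filter.2 ⟨Finset.mem_univ _, h⟩)
    · subst h; exact absurd hq (lt_irrefl _)
    · exact Finset.mem_union_left _ (Finset.mem_filter.2 ⟨Finset.mem_univ _, h, hq⟩)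
  calc (σ i : ℕ) = _ := hA.symm
    _ ≤ (Fi ∪ (Finset.univ.filter (fun q : Fin n => (q : ℕ) < (i : ℕ)))).card :=
        Finset.card_le_card hsub
    _ ≤ Fi.card + (Finset.univ.filter (fun q : Fin n => (q : ℕ) < (i : ℕ))).card :=
        Finset.card_union_le _ _
    _ = Fi.card + (i : ℕ) := by rw [card_lt_val]

lemma depth_le_lenS (σ : Perm (Fin n)) : depth σ ≤ (lenS σ : ℤ) := by
  classical
  set S := Finset.univ.filter (fun i : Fin n => (i : ℕ) < (σ i : ℕ)) with hS
  set Q := Finset.univ.filter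
    (fun p : Fin n × Fin n => ((p.1 : ℕ) < (σ p.1 : ℕ)) ∧ p.1 < p.2 ∧ σ p.2 < σ p.1) with hQ
  have hQP : Q ⊆ Finset.univ.filter
      (fun p : Fin n × Fin n => p.1 < p.2 ∧ σ p.2 < σ p.1) := by
    intro p hp
    simp only [hQ, Finset.mem_filter] at hp ⊢
    exact ⟨hp.1, hp.2.2⟩
  have hQcard : Q.card = ∑ i ∈ S, (Q.filter (fun p => p.1 = i)).card := by
    apply Finset.card_eq_sum_card_fiberwise
    intro p hp
    have hp' := (Finset.mem_filter.1 hp).2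
    exact Finset.mem_filter.2 ⟨Finset.mem_univ _, hp'.1⟩
  have hfib : ∀ i ∈ S, (Q.filter (fun p => p.1 = i)).card
      = (Finset.univ.filter (fun q : Fin n => i < q ∧ σ q < σ i)).card := by
    intro i hi
    simp only [hS, Finset.mem_filter] at hi
    refine Finset.card_bij' (fun p _ => p.2) (fun q _ => (i, q)) ?_ ?_ ?_ ?_
    · intro p hp
      obtain ⟨hpQ, hp1⟩ := Finset.mem_filter.1 hp
      obtain ⟨-, -, c2, c3⟩ := Finset.mem_filter.1 hpQ
      obtain ⟨p1, p2⟩ := p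
      dsimp only at hp1 c2 c3 ⊢
      subst hp1
      exact Finset.mem_filter.2 ⟨Finset.mem_univ _, c2, c3⟩
    · intro q hq
      obtain ⟨-, d1, d2⟩ := Finset.mem_filter.1 hq
      refine Finset.mem_filter.2 ⟨Finset.mem_filter.2 ⟨Finset.mem_univ _, hi.2, d1, d2⟩, rfl⟩
    · intro p hp
      obtain ⟨-, hp1⟩ := Finset.mem_filter.1 hp
      exact Prod.ext hp1.symm rfl
    · intro q _; rfl
  calc depth σ = ∑ i ∈ S, ((σ i : ℤ) - i) := rfl
    _ ≤ ∑ i ∈ S, ((Q.filter (fun p => p.1 = i)).card : ℤ) := by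
        apply Finset.sum_le_sum
        intro i hi
        rw [hfib i hi]
        have := key_count σ i
        have : ((σ i : ℕ) : ℤ) ≤ ((Finset.univ.filter
            (fun q : Fin n => i < q ∧ σ q < σ i)).card : ℤ) + (i : ℕ) := by exact_mod_cast this
        omega
    _ = (Q.card : ℤ) := by rw [hQcard]; push_cast; ring
    _ ≤ (lenS σ : ℤ) := by exact_mod_cast Finset.card_le_card hQP

lemma lower : ∀ (k : ℕ) (σ : Perm (Fin n)), σ.support.card = k →
    (lenS σ : ℤ) + n ≤ Dd σ + numCycles σ := by
  classical
  intro k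
  induction k using Nat.strong_induction_on with
  | _ k ih =>
  intro σ hk
  by_cases hone : σ = 1
  · subst hone
    have hl : lenS (1 : Perm (Fin n)) = 0 := by
      rw [lenS, Finset.card_eq_zero]
      apply Finset.filter_false_of_mem
      rintro p - ⟨h1, h2⟩
      exact absurd (h1.trans h2) (lt_irrefl _)
    have hD : Dd (1 : Perm (Fin n)) = 0 := by
      simp [Dd]
    have hN : numCycles (1 : Perm (Fin n)) = n := by
      rw [numCycles_eq, cycleFactorsFinset_one, support_one]
      simp
    rw [hl, hD, hN]
    simp
  · have hne : σ.support.Nonempty := by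
      rwa [Finset.nonempty_iff_ne_empty, Ne, support_eq_empty_iff]
    set i := σ.support.min' hne with hidef
    have hi_mem : i ∈ σ.support := Finset.min'_mem _ _
    have hσi : σ i ≠ i := mem_support.1 hi_mem
    have hmin : ∀ p : Fin n, p < i → σ p = p := by
      intro p hp
      by_contra h
      exact absurd (Finset.min'_le _ _ (mem_support.2 h)) (not_le.2 hp)
    have hlow : ∀ p : Fin n, σ p < i → σ p = p := by
      intro p hp
      exact σ.injective (hmin _ hp)
    have hia : i < σ i := by
      rcases lt_trichotomy (σ i) i with h | h | h
      · exact absurd (hlow i h) hσi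
      · exact absurd h hσi
      · exact h
    set a := σ i with ha
    set j := σ⁻¹ i with hjdef
    have hj : σ j = i := σ.apply_symm_apply i
    have hji : j ≠ i := by
      intro h
      rw [h] at hj
      exact hσi hj
    have hij : i < j := by
      have : j ∈ σ.support := mem_support.2 (by rw [hj]; exact Ne.symm hji)
      exact lt_of_le_of_ne (Finset.min'_le _ _ this) (Ne.symm hji)
    set σ' := Equiv.swap i a * σ with hσ'def
    have hσ'i : σ' i = i := by
      rw [hσ'def, Perm.mul_apply, ← ha, Equiv.swap_apply_right]
    have hσ'j : σ' j = a := by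
      rw [hσ'def, Perm.mul_apply, hj, Equiv.swap_apply_left]
    have hσ'p : ∀ p : Fin n, p ≠ i → p ≠ j → σ' p = σ p := by
      intro p hpi hpj
      have h1 : σ p ≠ i := by
        intro h
        apply hpj
        rw [hjdef, ← h, Equiv.Perm.inv_def, Equiv.symm_apply_apply]
      have h2 : σ p ≠ a := by
        intro h
        exact hpi (σ.injective (h.trans ha))
      rw [hσ'def, Perm.mul_apply, Equiv.swap_apply_of_ne_of_ne h1 h2]
    have hcard : σ'.support.card < σ.support.card := by
      rw [hσ'def, ha]
      exact card_support_swap_mul hσi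
    have IH := ih σ'.support.card (by omega) σ' rfl
    have hnum : numCycles σ' = numCycles σ + 1 := by
      rw [hσ'def, ha]
      exact numCycles_swap_mul σ i hσi
    set M := Finset.univ.filter (fun p : Fin n => i < p ∧ p < j ∧ σ p < a) with hM
    have hMσ : ∀ p : Fin n, p ∈ M → i < σ p := by
      intro p hp
      obtain ⟨-, c1, c2, c3⟩ := Finset.mem_filter.1 hp
      rcases lt_trichotomy (σ p) i with h | h | h
      · exact absurd ((hlow p h) ▸ h) (not_lt.2 (le_of_lt c1))
      · exfalso
        apply absurd c2 (not_lt.2 (le_of_eq _))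
        rw [hjdef, ← h, Equiv.Perm.inv_def, Equiv.symm_apply_apply]
      · exact h
    have hm1 : M.card + (i : ℕ) + 1 ≤ (a : ℕ) := by
      have hsub : M.card ≤ (Finset.univ.filter (fun v : Fin n => i < v ∧ v < a)).card := by
        apply Finset.card_le_card_of_injOn σ
        · intro p hp
          obtain ⟨-, c1, c2, c3⟩ := Finset.mem_filter.1 hp
          exact Finset.mem_filter.2 ⟨Finset.mem_univ _, hMσ p hp, c3⟩
        · exact fun x _ y _ h => σ.injective h
      rw [card_Ioo_val] at hsub
      have : (i : ℕ) < (a : ℕ) := hia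
      omega
    have hm2 : M.card + (i : ℕ) + 1 ≤ (j : ℕ) := by
      have hsub : M.card ≤ (Finset.univ.filter (fun v : Fin n => i < v ∧ v < j)).card := by
        apply Finset.card_le_card
        intro p hp
        obtain ⟨-, c1, c2, c3⟩ := Finset.mem_filter.1 hp
        exact Finset.mem_filter.2 ⟨Finset.mem_univ _, c1, c2⟩
      rw [card_Ioo_val] at hsub
      have : (i : ℕ) < (j : ℕ) := hij
      omega
    -- Dd relation
    have hDd : Dd σ = Dd σ' + (((a : ℤ) - i) + ((j : ℤ) - i) - |(a : ℤ) - j|) := by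
      have hsplit : ∀ τ : Perm (Fin n),
          Dd τ = ∑ p ∈ Finset.univ \ {i, j}, |(τ p : ℤ) - p| + (|(τ i : ℤ) - i| + |(τ j : ℤ) - j|) := by
        intro τ
        rw [Dd, ← Finset.sum_sdiff (Finset.subset_univ ({i, j} : Finset (Fin n)))]
        congr 1
        rw [Finset.sum_pair (Ne.symm hji)]
      have hrest : ∑ p ∈ Finset.univ \ {i, j}, |(σ p : ℤ) - p|
          = ∑ p ∈ Finset.univ \ {i, j}, |(σ' p : ℤ) - p| := by
        apply Finset.sum_congr rfl
        intro p hp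
        have := Finset.mem_sdiff.1 hp
        simp only [Finset.mem_insert, Finset.mem_singleton, not_or] at this
        rw [hσ'p p this.2.1 this.2.2]
      rw [hsplit σ, hsplit σ', hrest, hσ'i, hσ'j, hj, ← ha]
      have e1 : |(a : ℤ) - i| = (a : ℤ) - i := by
        apply abs_of_nonneg
        have : (i : ℕ) < (a : ℕ) := hia
        omega
      have e2 : |(i : ℤ) - j| = (j : ℤ) - i := by
        have : (i : ℕ) < (j : ℕ) := hij
        rw [abs_sub_comm, abs_of_nonneg] <;> omega
      have e3 : |(i : ℤ) - i| = 0 := by simp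
      rw [e1, e2, e3]
      ring
    -- lenS relation
    have hlen : (lenS σ : ℕ) ≤ lenS σ' + 2 * M.card + 1 := by
      set P := Finset.univ.filter (fun p : Fin n × Fin n => p.1 < p.2 ∧ σ p.2 < σ p.1) with hP
      set P' := Finset.univ.filter (fun p : Fin n × Fin n => p.1 < p.2 ∧ σ' p.2 < σ' p.1) with hP'
      have hident : P.card + (P' \ P).card = P'.card + (P \ P').card := by
        have e1 : (P \ P').card + P'.card = (P ∪ P').card := Finset.card_sdiff_add_card P P'
        have e2 : (P' \ P).card + P.card = (P' ∪ P).card := Finset.card_sdiff_add_card P' P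
        rw [Finset.union_comm] at e2
        omega
      set T1 := Finset.univ.filter
        (fun p : Fin n × Fin n => p.1 = i ∧ i < p.2 ∧ σ p.2 < a) with hT1
      set T2 := Finset.univ.filter
        (fun p : Fin n × Fin n => p.2 = j ∧ i < p.1 ∧ p.1 < j ∧ σ p.1 < a) with hT2
      have hsubset : P \ P' ⊆ T1 ∪ T2 := by
        rintro ⟨p, q⟩ hpq
        obtain ⟨hPm, hnP'⟩ := Finset.mem_sdiff.1 hpq
        obtain ⟨-, h1, h2⟩ := Finset.mem_filter.1 hPm
        have hnP'' : ¬ (σ' q < σ' p) := by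
          intro hcon
          exact hnP' (Finset.mem_filter.2 ⟨Finset.mem_univ _, h1, hcon⟩)
        dsimp only at h1 h2 hnP'' ⊢
        by_cases hpi : p = i
        · subst hpi
          exact Finset.mem_union_left _
            (Finset.mem_filter.2 ⟨Finset.mem_univ _, rfl, h1, by rw [ha]; exact h2⟩)
        by_cases hqj : q = j
        · subst hqj
          have h2' : i < σ p := by rw [← hj]; exact h2
          rcases lt_trichotomy p i with hc | hc | hc
          · exfalso
            rw [hmin p hc] at h2'
            exact absurd (hc.trans h2') (lt_irrefl _)
          · exact absurd hc hpi
          · have hpj' : p ≠ j := ne_of_lt h1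
            have e1 : σ' p = σ p := hσ'p p hpi hpj'
            rw [hσ'j, e1] at hnP''
            have h5 : σ p ≤ a := not_lt.1 hnP''
            have h6 : σ p ≠ a := by
              intro h
              exact hpi (σ.injective (h.trans ha))
            exact Finset.mem_union_right _
              (Finset.mem_filter.2 ⟨Finset.mem_univ _, rfl, hc, h1, lt_of_le_of_ne h5 h6⟩)
        by_cases hqi : q = i
        · exfalso
          subst hqi
          rw [hmin p h1] at h2
          exact absurd ((h1.trans hia).trans h2) (lt_irrefl _)
        by_cases hpj : p = j
        · exfalso
          subst hpj
          rw [hj] at h2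
          have := hlow q h2
          rw [this] at h2
          exact absurd ((hij.trans h1).trans h2) (lt_irrefl _)
        · exfalso
          rw [hσ'p p hpi hpj, hσ'p q hqi hqj] at hnP''
          exact hnP'' h2
      have hT1card : T1.card + (i : ℕ) ≤ (a : ℕ) := by
        have : T1.card ≤ (Finset.Ico (i : ℕ) (a : ℕ)).card := by
          apply Finset.card_le_card_of_injOn (fun p => (σ p.2 : ℕ))
          · intro p hp
            obtain ⟨-, c1, c2, c3⟩ := Finset.mem_filter.1 hp
            rw [Finset.mem_coe, Finset.mem_Ico]
            constructor
            · by_contra hcon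
              push_neg at hcon
              have hlt : σ p.2 < i := hcon
              have he := hlow _ hlt
              rw [he] at hlt
              exact absurd (c2.trans hlt) (lt_irrefl _)
            · exact c3
          · intro x hx y hy hxy
            obtain ⟨-, cx, -, -⟩ := Finset.mem_filter.1 hx
            obtain ⟨-, cy, -, -⟩ := Finset.mem_filter.1 hy
            have : x.2 = y.2 := σ.injective (Fin.val_injective hxy)
            exact Prod.ext (cx.trans cy.symm) this
        rw [Nat.card_Ico] at this
        have : (i : ℕ) < (a : ℕ) := hia
        omega
      have hT2card : T2.card ≤ M.card := by
        apply Finset.card_le_card_of_injOn (fun p => p.1)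
        · intro p hp
          obtain ⟨-, c1, c2, c3, c4⟩ := Finset.mem_filter.1 hp
          exact Finset.mem_filter.2 ⟨Finset.mem_univ _, c2, c3, c4⟩
        · intro x hx y hy hxy
          obtain ⟨-, cx, -⟩ := Finset.mem_filter.1 hx
          obtain ⟨-, cy, -⟩ := Finset.mem_filter.1 hy
          exact Prod.ext hxy (cx.trans cy.symm)
      -- lower bound on (P' \ P).card
      have hW : (a : ℕ) ≤ (P' \ P).card + M.card + (i : ℕ) + 1 := by
        set W := Finset.univ.filter (fun v : Fin n => i < v ∧ v < a) with hWdef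
        have hWcard : W.card = (a : ℕ) - (i : ℕ) - 1 := card_Ioo_val i a
        set W1 := Finset.univ.filter (fun v : Fin n => (i < v ∧ v < a) ∧ σ⁻¹ v < j) with hW1
        set W2 := Finset.univ.filter (fun v : Fin n => (i < v ∧ v < a) ∧ j < σ⁻¹ v) with hW2
        have hWsub : W ⊆ W1 ∪ W2 := by
          intro v hv
          obtain ⟨-, c1, c2⟩ := Finset.mem_filter.1 hv
          rcases lt_trichotomy (σ⁻¹ v) j with h | h | h
          · exact Finset.mem_union_left _ (Finset.mem_filter.2 ⟨Finset.mem_univ _, ⟨c1, c2⟩, h⟩)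
          · exfalso
            have : v = i := by
              rw [← hj, ← h, Equiv.Perm.inv_def, Equiv.apply_symm_apply]
            rw [this] at c1
            exact absurd c1 (lt_irrefl _)
          · exact Finset.mem_union_right _ (Finset.mem_filter.2 ⟨Finset.mem_univ _, ⟨c1, c2⟩, h⟩)
        have hW1card : W1.card ≤ M.card := by
          apply Finset.card_le_card_of_injOn (fun v => σ⁻¹ v)
          · intro v hv
            obtain ⟨-, ⟨c1, c2⟩, c3⟩ := Finset.mem_filter.1 hv
            have hav : σ (σ⁻¹ v) = v := σ.apply_symm_apply v
            refine Finset.mem_filter.2 ⟨Finset.mem_univ _, ?_, c3, by rw [hav]; exact c2⟩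
            rcases lt_trichotomy (σ⁻¹ v) i with h | h | h
            · exfalso
              have := hmin _ h
              rw [this] at hav
              rw [hav] at h
              exact absurd (c1.trans h) (lt_irrefl _)
            · exfalso
              rw [h] at hav
              rw [← hav, ← ha] at c2
              exact absurd c2 (lt_irrefl _)
            · exact h
          · intro x _ y _ hxy
            exact σ⁻¹.injective hxy
        have hW2card : W2.card ≤ (P' \ P).card := by
          apply Finset.card_le_card_of_injOn (fun v => ((j, σ⁻¹ v) : Fin n × Fin n))
          · intro v hv
            obtain ⟨-, ⟨c1, c2⟩, c3⟩ := Finset.mem_filter.1 hv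
            have hav : σ (σ⁻¹ v) = v := σ.apply_symm_apply v
            have hq1 : σ⁻¹ v ≠ i := by
              intro h
              rw [h, ← ha] at hav
              rw [← hav] at c2
              exact absurd c2 (lt_irrefl _)
            have hq2 : σ⁻¹ v ≠ j := ne_of_gt c3
            apply Finset.mem_sdiff.2
            constructor
            · refine Finset.mem_filter.2 ⟨Finset.mem_univ _, c3, ?_⟩
              rw [hσ'j, hσ'p _ hq1 hq2, hav]
              exact c2
            · intro hcon
              obtain ⟨-, -, d2⟩ := Finset.mem_filter.1 hcon
              dsimp only at d2
              rw [hav, hj] at d2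
              exact absurd (c1.trans d2) (lt_irrefl _)
          · intro x _ y _ hxy
            have := congrArg Prod.snd hxy
            dsimp only at this
            exact σ⁻¹.injective this
        have h1 : W.card ≤ W1.card + W2.card :=
          le_trans (Finset.card_le_card hWsub) (Finset.card_union_le _ _)
        have h2 : (i : ℕ) < (a : ℕ) := hia
        omega
      have hu : (P \ P').card ≤ T1.card + T2.card :=
        le_trans (Finset.card_le_card hsubset) (Finset.card_union_le _ _)
      have hfinal : P.card ≤ P'.card + 2 * M.card + 1 := by omega
      exact hfinal
    -- assemble
    have habs : |(a : ℤ) - j| ≤ (a : ℤ) + (j : ℤ) - 2 * ((M.card : ℤ) + (i : ℤ) + 1) := by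
      have c1 : ((M.card : ℤ) + i + 1) ≤ (a : ℤ) := by exact_mod_cast hm1
      have c2 : ((M.card : ℤ) + i + 1) ≤ (j : ℤ) := by exact_mod_cast hm2
      rw [abs_sub_le_iff]
      omega
    have hlenZ : (lenS σ : ℤ) ≤ (lenS σ' : ℤ) + 2 * M.card + 1 := by exact_mod_cast hlen
    have hnumZ : (numCycles σ' : ℤ) = (numCycles σ : ℤ) + 1 := by exact_mod_cast hnum
    have := IH
    omega

end DGAux

/-- (ℓ_S(σ) + ℓ_T(σ))/2 ≤ depth(σ) ≤ ℓ_S(σ). -/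
theorem stmt_12 (n : ℕ) (σ : Equiv.Perm (Fin n)) :
    ((lenS σ : ℤ) + (n - numCycles σ : ℕ)) ≤ 2 * depth σ
    ∧ depth σ ≤ (lenS σ : ℤ) := by
  constructor
  · have hl := DGAux.lower σ.support.card σ rfl
    have hc := DGAux.numCycles_le σ
    have h2 := DGAux.two_depth σ
    have hcast : ((n - numCycles σ : ℕ) : ℤ) = (n : ℤ) - (numCycles σ : ℤ) := by
      exact Nat.cast_sub hc
    rw [hcast, h2]
    omega
  · exact DGAux.depth_le_lenS σ
end

section
/- A permutation avoids both classical patterns 3142 and 2413 if and only if it avoids both vincular patterns [31,42] (the '3' and '1' adjacent, and the '4' and '2' adjacent) and [24,13] (the '2' and '4' adjacent, and the '1' and '3' adjacent). -/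
/-- σ contains the classical pattern 3142. -/
def has3142 {n : ℕ} (σ : Equiv.Perm (Fin n)) : Prop :=
  ∃ i₁ i₂ i₃ i₄ : Fin n, i₁ < i₂ ∧ i₂ < i₃ ∧ i₃ < i₄ ∧
    σ i₂ < σ i₄ ∧ σ i₄ < σ i₁ ∧ σ i₁ < σ i₃

/-- σ contains the classical pattern 2413. -/
def has2413 {n : ℕ} (σ : Equiv.Perm (Fin n)) : Prop :=
  ∃ i₁ i₂ i₃ i₄ : Fin n, i₁ < i₂ ∧ i₂ < i₃ ∧ i₃ < i₄ ∧
    σ i₃ < σ i₁ ∧ σ i₁ < σ i₄ ∧ σ i₄ < σ i₂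

/-- σ contains the vincular pattern [31,42]: the `31` and the `42` each occupy
adjacent positions. -/
def hasVin3142 {n : ℕ} (σ : Equiv.Perm (Fin n)) : Prop :=
  ∃ i₁ i₂ i₃ i₄ : Fin n, i₁ < i₂ ∧ i₂ < i₃ ∧ i₃ < i₄ ∧
    (i₂ : ℕ) = (i₁ : ℕ) + 1 ∧ (i₄ : ℕ) = (i₃ : ℕ) + 1 ∧
    σ i₂ < σ i₄ ∧ σ i₄ < σ i₁ ∧ σ i₁ < σ i₃

/-- σ contains the vincular pattern [24,13]: the `24` and the `13` each occupy
adjacent positions. -/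
def hasVin2413 {n : ℕ} (σ : Equiv.Perm (Fin n)) : Prop :=
  ∃ i₁ i₂ i₃ i₄ : Fin n, i₁ < i₂ ∧ i₂ < i₃ ∧ i₃ < i₄ ∧
    (i₂ : ℕ) = (i₁ : ℕ) + 1 ∧ (i₄ : ℕ) = (i₃ : ℕ) + 1 ∧
    σ i₃ < σ i₁ ∧ σ i₁ < σ i₄ ∧ σ i₄ < σ i₂

private lemma step1 {K m x x' s1 s2 s1' s2' : ℕ} (hx : x' + 1 ≤ x) (hs : s1' + s2' ≤ K)
    (hs1 : 1 ≤ s1) (hm : K * x + s1 + s2 ≤ m + 1) : K * x' + s1' + s2' ≤ m := by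
  have h2 : K * (x' + 1) ≤ K * x := Nat.mul_le_mul_left K hx
  have h3 : K * (x' + 1) = K * x' + K := by ring
  linarith

private lemma step2 {K m x s1 s2 s1' s2' : ℕ} (h : s1' + s2' + 1 ≤ s1 + s2)
    (hm : K * x + s1 + s2 ≤ m + 1) : K * x + s1' + s2' ≤ m := by linarith

private lemma key {n : ℕ} (σ : Equiv.Perm (Fin n)) (m : ℕ) :
    ∀ a b c d : Fin n, a < b → b < c → c < d →
      ((σ c < σ a ∧ σ a < σ d ∧ σ d < σ b) ∨ (σ b < σ d ∧ σ d < σ a ∧ σ a < σ c)) →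
      2 * n * ((d : ℕ) - (a : ℕ)) + ((b : ℕ) - (a : ℕ)) + ((d : ℕ) - (c : ℕ)) ≤ m →
      hasVin3142 σ ∨ hasVin2413 σ := by
  induction m with
  | zero =>
    intro a b c d hab hbc hcd _ hm
    have hab' : (a : ℕ) < b := hab
    have hbc' : (b : ℕ) < c := hbc
    have hcd' : (c : ℕ) < d := hcd
    have hd : (d : ℕ) < n := d.isLt
    have hn : 1 ≤ n := by omega
    have h1 : 1 ≤ (d : ℕ) - (a : ℕ) := by omega
    have h2 : 2 * n ≤ 2 * n * ((d : ℕ) - (a : ℕ)) := by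
      calc 2 * n = 2 * n * 1 := by ring
        _ ≤ _ := Nat.mul_le_mul_left _ h1
    linarith
  | succ m ih =>
    intro a b c d hab hbc hcd hpat hm
    have hab' : (a : ℕ) < b := hab
    have hbc' : (b : ℕ) < c := hbc
    have hcd' : (c : ℕ) < d := hcd
    have hd : (d : ℕ) < n := d.isLt
    by_cases hadj : (b : ℕ) = (a : ℕ) + 1 ∧ (d : ℕ) = (c : ℕ) + 1
    · rcases hpat with ⟨h1, h2, h3⟩ | ⟨h1, h2, h3⟩
      · exact Or.inr ⟨a, b, c, d, hab, hbc, hcd, hadj.1, hadj.2, h1, h2, h3⟩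
      · exact Or.inl ⟨a, b, c, d, hab, hbc, hcd, hadj.1, hadj.2, h1, h2, h3⟩
    · by_cases hb1 : (b : ℕ) = (a : ℕ) + 1
      · -- then the gap is between c and d : (c:ℕ)+1 < d
        have hgap : (c : ℕ) + 1 < d := by
          rcases Decidable.not_and_iff_or_not.mp hadj with h | h
          · omega
          · omega
        set q : Fin n := ⟨(c : ℕ) + 1, by omega⟩ with hqdef
        have hq : (q : ℕ) = (c : ℕ) + 1 := rfl
        rcases hpat with ⟨h1, h2, h3⟩ | ⟨h1, h2, h3⟩
        · -- 2413 : σc < σa < σd < σb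
          rcases lt_trichotomy (σ q) (σ a) with hv | hv | hv
          · -- (a,b,q,d) is 2413, same span, smaller (d-q)
            exact ih a b q d hab (Fin.lt_def.mpr (by omega)) (Fin.lt_def.mpr (by omega))
              (Or.inl ⟨hv, h2, h3⟩) (step2 (by omega) hm)
          · exact absurd (congrArg Fin.val (σ.injective hv)) (by omega)
          · rcases lt_trichotomy (σ q) (σ b) with hw | hw | hw
            · -- σa < σq < σb : (a,b,c,q) is 2413, smaller span
              exact ih a b c q hab hbc (Fin.lt_def.mpr (by omega))
                (Or.inl ⟨h1, hv, hw⟩) (step1 (by omega) (by omega) (by omega) hm)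
            · exact absurd (congrArg Fin.val (σ.injective hw)) (by omega)
            · -- σq > σb : (b,c,q,d) is 3142, smaller span
              exact ih b c q d hbc (Fin.lt_def.mpr (by omega)) (Fin.lt_def.mpr (by omega))
                (Or.inr ⟨h1.trans h2, h3, hw⟩) (step1 (by omega) (by omega) (by omega) hm)
        · -- 3142 : σb < σd < σa < σc
          rcases lt_trichotomy (σ q) (σ a) with hv | hv | hv
          · rcases lt_trichotomy (σ q) (σ b) with hw | hw | hw
            · -- σq < σb : (b,c,q,d) is 2413, smaller span
              exact ih b c q d hbc (Fin.lt_def.mpr (by omega)) (Fin.lt_def.mpr (by omega))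
                (Or.inl ⟨hw, h1, h2.trans h3⟩) (step1 (by omega) (by omega) (by omega) hm)
            · exact absurd (congrArg Fin.val (σ.injective hw)) (by omega)
            · -- σb < σq < σa : (a,b,c,q) is 3142, smaller span
              exact ih a b c q hab hbc (Fin.lt_def.mpr (by omega))
                (Or.inr ⟨hw, hv, h3⟩) (step1 (by omega) (by omega) (by omega) hm)
          · exact absurd (congrArg Fin.val (σ.injective hv)) (by omega)
          · -- σq > σa : (a,b,q,d) is 3142, same span, smaller (d-q)
            exact ih a b q d hab (Fin.lt_def.mpr (by omega)) (Fin.lt_def.mpr (by omega))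
              (Or.inr ⟨h1, h2, hv⟩) (step2 (by omega) hm)
      · -- the gap is between a and b : (a:ℕ)+1 < b
        have hgap : (a : ℕ) + 1 < b := by omega
        set p : Fin n := ⟨(a : ℕ) + 1, by omega⟩ with hpdef
        have hp : (p : ℕ) = (a : ℕ) + 1 := rfl
        rcases hpat with ⟨h1, h2, h3⟩ | ⟨h1, h2, h3⟩
        · -- 2413 : σc < σa < σd < σb
          rcases lt_trichotomy (σ p) (σ c) with hv | hv | hv
          · -- σp < σc : (a,p,b,c) is 3142, smaller span
            exact ih a p b c (Fin.lt_def.mpr (by omega)) (Fin.lt_def.mpr (by omega)) hbc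
              (Or.inr ⟨hv, h1, h2.trans h3⟩) (step1 (by omega) (by omega) (by omega) hm)
          · exact absurd (congrArg Fin.val (σ.injective hv)) (by omega)
          · rcases lt_trichotomy (σ p) (σ d) with hw | hw | hw
            · -- σc < σp < σd : (p,b,c,d) is 2413, smaller span
              exact ih p b c d (Fin.lt_def.mpr (by omega)) hbc hcd
                (Or.inl ⟨hv, hw, h3⟩) (step1 (by omega) (by omega) (by omega) hm)
            · exact absurd (congrArg Fin.val (σ.injective hw)) (by omega)
            · -- σp > σd : (a,p,c,d) is 2413, same span, smaller (p-a)
              exact ih a p c d (Fin.lt_def.mpr (by omega)) (Fin.lt_def.mpr (by omega)) hcd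
                (Or.inl ⟨h1, h2, hw⟩) (step2 (by omega) hm)
        · -- 3142 : σb < σd < σa < σc
          rcases lt_trichotomy (σ p) (σ d) with hv | hv | hv
          · -- σp < σd : (a,p,c,d) is 3142, same span, smaller (p-a)
            exact ih a p c d (Fin.lt_def.mpr (by omega)) (Fin.lt_def.mpr (by omega)) hcd
              (Or.inr ⟨hv, h2, h3⟩) (step2 (by omega) hm)
          · exact absurd (congrArg Fin.val (σ.injective hv)) (by omega)
          · rcases lt_trichotomy (σ p) (σ c) with hw | hw | hw
            · -- σd < σp < σc : (p,b,c,d) is 3142, smaller span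
              exact ih p b c d (Fin.lt_def.mpr (by omega)) hbc hcd
                (Or.inr ⟨h1, hv, hw⟩) (step1 (by omega) (by omega) (by omega) hm)
            · exact absurd (congrArg Fin.val (σ.injective hw)) (by omega)
            · -- σp > σc : (a,p,b,c) is 2413, smaller span
              exact ih a p b c (Fin.lt_def.mpr (by omega)) (Fin.lt_def.mpr (by omega)) hbc
                (Or.inl ⟨h1.trans h2, h3, hw⟩) (step1 (by omega) (by omega) (by omega) hm)

/-- {3142, 2413}-avoidance is equivalent to {[31,42], [24,13]}-avoidance. -/
theorem stmt_13 (n : ℕ) (σ : Equiv.Perm (Fin n)) :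
    (¬ has3142 σ ∧ ¬ has2413 σ) ↔ (¬ hasVin3142 σ ∧ ¬ hasVin2413 σ) := by
  constructor
  · rintro ⟨h1, h2⟩
    refine ⟨fun ⟨i1, i2, i3, i4, ha, hb, hc, _, _, v1, v2, v3⟩ =>
      h1 ⟨i1, i2, i3, i4, ha, hb, hc, v1, v2, v3⟩,
      fun ⟨i1, i2, i3, i4, ha, hb, hc, _, _, v1, v2, v3⟩ =>
      h2 ⟨i1, i2, i3, i4, ha, hb, hc, v1, v2, v3⟩⟩
  · rintro ⟨h1, h2⟩
    constructor
    · rintro ⟨a, b, c, d, hab, hbc, hcd, v1, v2, v3⟩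
      rcases key σ (2 * n * ((d : ℕ) - (a : ℕ)) + ((b : ℕ) - (a : ℕ)) + ((d : ℕ) - (c : ℕ)))
        a b c d hab hbc hcd (Or.inr ⟨v1, v2, v3⟩) le_rfl with h | h
      · exact h1 h
      · exact h2 h
    · rintro ⟨a, b, c, d, hab, hbc, hcd, v1, v2, v3⟩
      rcases key σ (2 * n * ((d : ℕ) - (a : ℕ)) + ((b : ℕ) - (a : ℕ)) + ((d : ℕ) - (c : ℕ)))
        a b c d hab hbc hcd (Or.inl ⟨v1, v2, v3⟩) le_rfl with h | h
      · exact h1 h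
      · exact h2 h
end

section
/- A permutation avoids both classical patterns 3142 and 2413 if and only if it avoids both vincular patterns [31,4,2] (only the '3' and '1' required adjacent) and [24,1,3] (only the '2' and '4' required adjacent). -/
/-- σ contains the vincular pattern [31,4,2]: only the `3` and `1` are
required adjacent. -/
def hasVin31_4_2 {n : ℕ} (σ : Equiv.Perm (Fin n)) : Prop :=
  ∃ i₁ i₂ i₃ i₄ : Fin n, i₁ < i₂ ∧ i₂ < i₃ ∧ i₃ < i₄ ∧
    (i₂ : ℕ) = (i₁ : ℕ) + 1 ∧
    σ i₂ < σ i₄ ∧ σ i₄ < σ i₁ ∧ σ i₁ < σ i₃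

/-- σ contains the vincular pattern [24,1,3]: only the `2` and `4` are
required adjacent. -/
def hasVin24_1_3 {n : ℕ} (σ : Equiv.Perm (Fin n)) : Prop :=
  ∃ i₁ i₂ i₃ i₄ : Fin n, i₁ < i₂ ∧ i₂ < i₃ ∧ i₃ < i₄ ∧
    (i₂ : ℕ) = (i₁ : ℕ) + 1 ∧
    σ i₃ < σ i₁ ∧ σ i₁ < σ i₄ ∧ σ i₄ < σ i₂

private lemma key_aux {n : ℕ} (σ : Equiv.Perm (Fin n))
    (h1 : ¬ hasVin31_4_2 σ) (h2 : ¬ hasVin24_1_3 σ) :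
    ∀ g : ℕ, ∀ i₁ i₂ i₃ i₄ : Fin n, (i₂ : ℕ) - (i₁ : ℕ) ≤ g →
      i₁ < i₂ → i₂ < i₃ → i₃ < i₄ →
      ((σ i₂ < σ i₄ ∧ σ i₄ < σ i₁ ∧ σ i₁ < σ i₃) ∨
       (σ i₃ < σ i₁ ∧ σ i₁ < σ i₄ ∧ σ i₄ < σ i₂)) → False := by
  intro g
  induction g with
  | zero =>
    intro i₁ i₂ i₃ i₄ hg h12 _ _ _
    have := Fin.lt_def.mp h12
    omega
  | succ g ih =>
    intro i₁ i₂ i₃ i₄ hg h12 h23 h34 hocc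
    have h12' := Fin.lt_def.mp h12
    have h23' := Fin.lt_def.mp h23
    have h34' := Fin.lt_def.mp h34
    by_cases hadj : (i₂ : ℕ) = (i₁ : ℕ) + 1
    · rcases hocc with h | h
      · exact h1 ⟨i₁, i₂, i₃, i₄, h12, h23, h34, hadj, h⟩
      · exact h2 ⟨i₁, i₂, i₃, i₄, h12, h23, h34, hadj, h⟩
    · have hjn : (i₁ : ℕ) + 1 < n := by have := i₂.isLt; omega
      set j : Fin n := ⟨(i₁ : ℕ) + 1, hjn⟩ with hjdef
      have h1j : i₁ < j := by simp [Fin.lt_def, hjdef]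
      have hj2 : j < i₂ := by simp only [Fin.lt_def, hjdef]; omega
      have hj3 : j < i₃ := lt_trans hj2 h23
      have hj4 : j < i₄ := lt_trans hj3 h34
      have hadjj : (j : ℕ) = (i₁ : ℕ) + 1 := rfl
      have hne3 : σ j ≠ σ i₃ := fun h => (ne_of_lt hj3) (σ.injective h)
      have hne4 : σ j ≠ σ i₄ := fun h => (ne_of_lt hj4) (σ.injective h)
      have hgap : (i₂ : ℕ) - (j : ℕ) ≤ g := by simp only [hjdef]; omega
      rcases hocc with ⟨hA, hB, hC⟩ | ⟨hA, hB, hC⟩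
      · -- 3142 occurrence: σ i₂ < σ i₄ < σ i₁ < σ i₃
        rcases lt_trichotomy (σ j) (σ i₄) with hc | hc | hc
        · exact h1 ⟨i₁, j, i₃, i₄, h1j, hj3, h34, hadjj, hc, hB, hC⟩
        · exact hne4 hc
        · rcases lt_trichotomy (σ j) (σ i₃) with hd | hd | hd
          · exact ih j i₂ i₃ i₄ hgap hj2 h23 h34 (Or.inl ⟨hA, hc, hd⟩)
          · exact hne3 hd
          · exact h2 ⟨i₁, j, i₂, i₃, h1j, hj2, h23, hadjj,
              lt_trans hA hB, hC, hd⟩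
      · -- 2413 occurrence: σ i₃ < σ i₁ < σ i₄ < σ i₂
        rcases lt_trichotomy (σ i₄) (σ j) with hc | hc | hc
        · exact h2 ⟨i₁, j, i₃, i₄, h1j, hj3, h34, hadjj, hA, hB, hc⟩
        · exact hne4 hc.symm
        · rcases lt_trichotomy (σ i₃) (σ j) with hd | hd | hd
          · exact ih j i₂ i₃ i₄ hgap hj2 h23 h34 (Or.inr ⟨hd, hc, hC⟩)
          · exact hne3 hd.symm
          · exact h1 ⟨i₁, j, i₂, i₃, h1j, hj2, h23, hadjj,
              hd, hA, lt_trans hB hC⟩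

/-- {3142, 2413}-avoidance is equivalent to {[31,4,2], [24,1,3]}-avoidance. -/
theorem stmt_14 (n : ℕ) (σ : Equiv.Perm (Fin n)) :
    (¬ has3142 σ ∧ ¬ has2413 σ) ↔ (¬ hasVin31_4_2 σ ∧ ¬ hasVin24_1_3 σ) := by
  constructor
  · rintro ⟨ha, hb⟩
    constructor
    · rintro ⟨i₁, i₂, i₃, i₄, h12, h23, h34, _, hocc⟩
      exact ha ⟨i₁, i₂, i₃, i₄, h12, h23, h34, hocc⟩
    · rintro ⟨i₁, i₂, i₃, i₄, h12, h23, h34, _, hocc⟩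
      exact hb ⟨i₁, i₂, i₃, i₄, h12, h23, h34, hocc⟩
  · rintro ⟨h1, h2⟩
    constructor
    · rintro ⟨i₁, i₂, i₃, i₄, h12, h23, h34, hocc⟩
      exact key_aux σ h1 h2 ((i₂ : ℕ) - (i₁ : ℕ)) i₁ i₂ i₃ i₄ le_rfl h12 h23 h34
        (Or.inl hocc)
    · rintro ⟨i₁, i₂, i₃, i₄, h12, h23, h34, hocc⟩
      exact key_aux σ h1 h2 ((i₂ : ℕ) - (i₁ : ℕ)) i₁ i₂ i₃ i₄ le_rfl h12 h23 h34
        (Or.inr hocc)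
end
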